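/- The alternative embedding sends localization spaces into the wavelet subspaces of L(Γ([n])): let A ⊆ [n] with |A| = k ≥ 2 and F ∈ H_A. Then (i) M_A(φ'_{[n]} F) = F; (ii) M_B(φ'_{[n]} F) = 0 for every B ⊆ [n] with 2 ≤ |B| ≤ k−1; and (iii) Σ_{σ∈Γ([n])} (φ'_{[n]}F)(σ) = 0. In particular φ'_{[n]} is injective on H_A. -/

import Mathlib

/-!
For `F` supported on `Γ(A)` and `σ ∈ Γ(C)` with `A ⊆ C`, `φ'_C F (σ) = (|A|!/|C|!) F (σ|_A)`.
Hence `φ'_{C ∪ {x}} ∘ φ'_C = φ'_{C ∪ {x}}` on `L(Γ(A))`, and `φ'_{[n]}` is obtained by adding the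
letters outside `A` one at a time. Adding a letter `x ∉ C` to `G ∈ L(Γ(C))` leaves the marginals at
words avoiding `x` unchanged, and turns the marginal at `π₁ x π₂` into
`(M G (π₁ π₂) + Σ_y M G (π₁ y π₂)) / (|C| + 1)`: the insertion points of `x` into `w` that make
`π₁ x π₂` a subword are counted by `1[π₁ π₂ ⊂ w] + #{y | π₁ y π₂ ⊂ w}`. No word on the right is
longer than `π₁ x π₂`, so the vanishing of all marginals of `F ∈ H_A` on fewer than `|A|` letters passes
to `φ'_{[n]} F`, while its marginals at rankings of `A` stay equal to `F`.
-/

open Finset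
open scoped List

abbrev Word (n : ℕ) := List (Fin n)

/-- `Γ(A)`: duplicate-free words whose set of letters is exactly `A`. -/
noncomputable def rankings (n : ℕ) (A : Finset (Fin n)) : Finset (Word n) :=
  A.toList.permutations.toFinset

/-- All duplicate-free words on `[n]`. -/
noncomputable def allWords (n : ℕ) : Finset (Word n) :=
  Finset.univ.biUnion fun A : Finset (Fin n) => rankings n A

def IsRanking {n : ℕ} (A : Finset (Fin n)) (w : Word n) : Prop :=
  w.Nodup ∧ w.toFinset = A

instance {n : ℕ} (A : Finset (Fin n)) (w : Word n) : Decidable (IsRanking A w) :=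
  inferInstanceAs (Decidable (w.Nodup ∧ w.toFinset = A))

/-- Membership in `L(Γ(A))`: functions supported on `Γ(A)`. -/
def MemL {n : ℕ} (A : Finset (Fin n)) (F : Word n → ℝ) : Prop :=
  ∀ w, F w ≠ 0 → IsRanking A w

/-- Marginal operator `M_B` (with the convention `M_∅ F = (Σ F)·δ_0̄`). -/
noncomputable def marg {n : ℕ} (B : Finset (Fin n)) (F : Word n → ℝ) : Word n → ℝ :=
  fun π => if IsRanking B π then ∑ σ ∈ allWords n, (if π <+ σ then F σ else 0) else 0

/-- Membership in the localization space `H_B` (for `B = ∅` this is `L(Γ(∅)) = ℝ·δ_0̄`). -/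
def MemH {n : ℕ} (B : Finset (Fin n)) (F : Word n → ℝ) : Prop :=
  MemL B F ∧
    (∀ B' : Finset (Fin n), B' ⊂ B → 2 ≤ B'.card → marg B' F = 0) ∧
    (2 ≤ B.card → ∑ π ∈ rankings n B, F π = 0)

/-- `P̄(A) = {B ⊆ A : |B| ≥ 2} ∪ {∅}`. -/
def Pbar {n : ℕ} (A : Finset (Fin n)) : Finset (Finset (Fin n)) :=
  A.powerset.filter fun B => 2 ≤ B.card ∨ B = ∅

/-- Synthesis operator `φ_A`. -/
noncomputable def synth {n : ℕ} (A : Finset (Fin n)) (F : Word n → ℝ) : Word n → ℝ :=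
  fun σ =>
    if IsRanking A σ then
      F [] / (Nat.factorial A.card : ℝ) +
        ∑ π ∈ allWords n,
          (if π ≠ [] ∧ π <:+: σ then F π / (Nat.factorial (A.card - π.length + 1) : ℝ) else 0)
    else 0

/-- Dirac function `δ_π`. -/
noncomputable def dirac {n : ℕ} (π : Word n) : Word n → ℝ :=
  fun w => if w = π then 1 else 0

/-- `σ|_C`: the induced word of `σ` on `C`. -/
def restrictWord {n : ℕ} (σ : Word n) (C : Finset (Fin n)) : Word n :=
  σ.filter fun a => decide (a ∈ C)

/-- The alternative embedding `φ'_B`: `φ'_B δ_π = (|π|!/|B|!)·1_{{σ ∈ Γ(B) : π ⊂ σ}}`. -/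
noncomputable def synth' {n : ℕ} (B : Finset (Fin n)) (F : Word n → ℝ) : Word n → ℝ :=
  fun σ =>
    if IsRanking B σ then
      ∑ π ∈ allWords n,
        (if π <+ σ then ((Nat.factorial π.length : ℝ) / (Nat.factorial B.card : ℝ)) * F π else 0)
    else 0

theorem Finset.induction_on_superset {α : Type*} [DecidableEq α] {p : Finset α → Prop}
    {A C : Finset α} (hAC : A ⊆ C) (base : p A)
    (step : ∀ ⦃x : α⦄ ⦃s : Finset α⦄, A ⊆ s → x ∉ s → p s → p (insert x s)) : p C := by
  suffices h : ∀ D ⊆ C \ A, p (A ∪ D) by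
    simpa [union_sdiff_of_subset hAC] using h (C \ A) subset_rfl
  intro D hD
  induction D using Finset.induction_on with
  | empty => simpa using base
  | insert x D hxD ih =>
    rw [insert_subset_iff, mem_sdiff] at hD
    rw [union_insert]
    exact step subset_union_left (by simp [hD.1.2, hxD]) (ih hD.2)

namespace List

variable {α : Type*}

theorem sublist_append_cons_iff_of_notMem [DecidableEq α] {l u v : List α} {x : α}
    (hl : x ∉ l) (hu : x ∉ u) : l <+ u ++ x :: v ↔ l <+ u ++ v := by
  refine ⟨fun h => ?_, fun h => h.trans ((sublist_cons_self x v).append_left u)⟩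
  simpa [erase_of_not_mem hl, erase_append_right _ hu] using h.erase x

theorem cons_sublist_cons_iff_of_ne {a b : α} {l l' : List α} (h : a ≠ b) :
    a :: l <+ b :: l' ↔ a :: l <+ l' := by
  simp [sublist_cons_iff, h]

theorem append_cons_sublist_append_cons_iff {l₁ l₂ u v : List α} {x : α}
    (h₁ : x ∉ l₁) (hu : x ∉ u) (hv : x ∉ v) :
    l₁ ++ x :: l₂ <+ u ++ x :: v ↔ l₁ <+ u ∧ l₂ <+ v := by
  induction u generalizing l₁ with
  | nil =>
    cases l₁ with
    | nil => simp
    | cons c l₁ =>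
      have hc : c ≠ x := fun h => h₁ (h ▸ mem_cons_self)
      simp only [cons_append, nil_append, cons_sublist_cons_iff_of_ne hc, sublist_nil,
        reduceCtorEq, false_and, iff_false]
      exact fun h => hv (h.subset (by simp))
  | cons a u ih =>
    have ha : a ≠ x := fun h => hu (h ▸ mem_cons_self)
    rw [mem_cons, not_or] at hu
    cases l₁ with
    | nil => simpa [cons_sublist_cons_iff_of_ne ha.symm] using ih h₁ hu.2
    | cons c l₁ =>
      by_cases hca : c = a
      · subst hca
        rw [mem_cons, not_or] at h₁
        simpa using ih h₁.2 hu.2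
      · simpa [cons_sublist_cons_iff_of_ne hca] using ih h₁ hu.2

theorem sum_ite_cons_sublist_cons [Fintype α] [DecidableEq α] {M : Type*} [AddCommMonoid M]
    {a : α} {w : List α} (ha : a ∉ w) (l : List α) (c : M) :
    ∑ y, (if y :: l <+ a :: w then c else 0)
      = (if l <+ w then c else 0) + ∑ y, (if y :: l <+ w then c else 0) := by
  have hsplit : ∀ y, (if y :: l <+ a :: w then c else 0)
      = (if y = a then (if l <+ w then c else 0) else 0) + (if y :: l <+ w then c else 0) := by
    intro y
    by_cases hya : y = a
    · subst hya
      have : ¬ y :: l <+ w := fun h => ha (h.subset mem_cons_self)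
      simp [this]
    · simp [cons_sublist_cons_iff_of_ne hya, hya]
  simp [hsplit, sum_add_distrib]

theorem sum_range_sublist_take_and_drop [Fintype α] [DecidableEq α] {M : Type*}
    [AddCommMonoid M] {w : List α} (hw : w.Nodup) (l₁ l₂ : List α) (c : M) :
    ∑ j ∈ Finset.range (w.length + 1), (if l₁ <+ w.take j ∧ l₂ <+ w.drop j then c else 0)
      = (if l₁ ++ l₂ <+ w then c else 0) + ∑ y, (if l₁ ++ y :: l₂ <+ w then c else 0) := by
  induction w generalizing l₁ with
  | nil => simp
  | cons a w ih =>
    rw [nodup_cons] at hw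
    rw [length_cons, Finset.sum_range_succ']
    simp only [take_succ_cons, drop_succ_cons, take_zero, drop_zero]
    cases l₁ with
    | nil =>
      have := ih hw.2 []
      simp only [nil_sublist, true_and, nil_append] at this ⊢
      rw [this, sum_ite_cons_sublist_cons hw.1]
      abel
    | cons b l₁ =>
      by_cases hba : b = a
      · subst hba
        simpa using ih hw.2 l₁
      · simpa [cons_sublist_cons_iff_of_ne hba] using ih hw.2 (b :: l₁)

end List

section

variable {n : ℕ}

theorem mem_rankings {A : Finset (Fin n)} {w : Word n} : w ∈ rankings n A ↔ IsRanking A w := by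
  simp only [rankings, List.mem_toFinset, List.mem_permutations]
  refine ⟨fun h => ⟨h.nodup_iff.2 A.nodup_toList, ?_⟩, fun h => ?_⟩
  · ext a
    simp [h.mem_iff]
  · exact List.perm_of_nodup_nodup_toFinset_eq h.1 A.nodup_toList
      (by rw [h.2, A.toList_toFinset])

theorem mem_allWords {w : Word n} : w ∈ allWords n ↔ w.Nodup := by
  simp only [allWords, mem_biUnion, mem_univ, true_and, mem_rankings]
  exact ⟨fun ⟨_, h⟩ => h.1, fun h => ⟨w.toFinset, h, rfl⟩⟩

theorem restrictWord_sublist (w : Word n) (A : Finset (Fin n)) : restrictWord w A <+ w :=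
  List.filter_sublist

namespace IsRanking

variable {A C : Finset (Fin n)} {w : Word n}

theorem length_eq (h : IsRanking A w) : w.length = A.card := by
  rw [← h.2, List.toFinset_card_of_nodup h.1]

theorem perm {w' : Word n} (h : IsRanking A w) (hp : w.Perm w') : IsRanking A w' :=
  ⟨hp.nodup_iff.1 h.1, (List.toFinset_eq_of_perm _ _ hp).symm.trans h.2⟩

theorem restrictWord_eq_self (h : IsRanking A w) : restrictWord w A = w :=
  List.filter_eq_self.2 fun a ha => by simp [← h.2, ha]

theorem restrictWord (h : IsRanking C w) (hAC : A ⊆ C) : IsRanking A (restrictWord w A) := by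
  refine ⟨h.1.filter _, ?_⟩
  ext a
  simp only [_root_.restrictWord, List.toFinset_filter, mem_filter, decide_eq_true_eq, h.2]
  exact ⟨And.right, fun ha => ⟨hAC ha, ha⟩⟩

theorem eq_restrictWord_of_sublist {τ : Word n} (hτ : IsRanking A τ) (h : IsRanking C w)
    (hAC : A ⊆ C) (hτw : τ <+ w) : τ = _root_.restrictWord w A := by
  have hsub := hτw.filter (fun a => decide (a ∈ A))
  change _root_.restrictWord τ A <+ _root_.restrictWord w A at hsub
  rw [hτ.restrictWord_eq_self] at hsub
  exact hsub.eq_of_length (by rw [hτ.length_eq, (h.restrictWord hAC).length_eq])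

end IsRanking

theorem isRanking_insert_cons_iff {C : Finset (Fin n)} {x : Fin n} (hx : x ∉ C) {w : Word n} :
    IsRanking (insert x C) (x :: w) ↔ IsRanking C w := by
  refine ⟨fun ⟨hnd, hfs⟩ => ?_, fun ⟨hnd, hfs⟩ => ?_⟩
  · rw [List.nodup_cons] at hnd
    refine ⟨hnd.2, ?_⟩
    rw [List.toFinset_cons] at hfs
    rw [← erase_insert (mt List.mem_toFinset.1 hnd.1), hfs, erase_insert hx]
  · refine ⟨List.nodup_cons.2 ⟨?_, hnd⟩, by rw [List.toFinset_cons, hfs]⟩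
    rwa [← List.mem_toFinset, hfs]

theorem isRanking_insert_append_cons_iff {C : Finset (Fin n)} {x : Fin n} (hx : x ∉ C)
    {u v : Word n} : IsRanking (insert x C) (u ++ x :: v) ↔ IsRanking C (u ++ v) :=
  ⟨fun h => (isRanking_insert_cons_iff hx).1 (h.perm List.perm_middle),
    fun h => ((isRanking_insert_cons_iff hx).2 h).perm List.perm_middle.symm⟩

theorem restrictWord_restrictWord {A C : Finset (Fin n)} (hAC : A ⊆ C) (w : Word n) :
    restrictWord (restrictWord w C) A = restrictWord w A := by
  simp only [restrictWord, List.filter_filter]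
  congr 1
  ext a
  by_cases ha : a ∈ A
  · simp [ha, hAC ha]
  · simp [ha]

theorem restrictWord_append_cons_of_notMem {A : Finset (Fin n)} {x : Fin n} (hx : x ∉ A)
    (u v : Word n) : restrictWord (u ++ x :: v) A = restrictWord (u ++ v) A := by
  simp [restrictWord, hx]

theorem sum_rankings_insert {M : Type*} [AddCommMonoid M] {C : Finset (Fin n)} {x : Fin n}
    (hx : x ∉ C) (f : Word n → M) :
    ∑ ρ ∈ rankings n (insert x C), f ρ
      = ∑ w ∈ rankings n C, ∑ j ∈ range (w.length + 1), f (w.take j ++ x :: w.drop j) := by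
  rw [← sum_sigma (rankings n C) (fun w => range (w.length + 1))
    (fun p => f (p.1.take p.2 ++ x :: p.1.drop p.2))]
  have decomp : ∀ ρ ∈ rankings n (insert x C), ∃ u v, ρ = u ++ x :: v ∧ x ∉ u := fun ρ hρ =>
    List.eq_append_cons_of_mem (by rw [← List.mem_toFinset, (mem_rankings.1 hρ).2]; simp)
  have hxw : ∀ p ∈ (rankings n C).sigma fun w => range (w.length + 1), x ∉ p.1.take p.2 :=
    fun p hp h => hx <| by
      rw [← (mem_rankings.1 (mem_sigma.1 hp).1).2]
      exact List.mem_toFinset.2 ((List.take_sublist _ _).subset h)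
  refine sum_nbij' (fun ρ => ⟨ρ.erase x, ρ.idxOf x⟩) (fun p => p.1.take p.2 ++ x :: p.1.drop p.2)
    ?_ ?_ ?_ ?_ ?_
  · intro ρ hρ
    obtain ⟨u, v, rfl, hxu⟩ := decomp ρ hρ
    have := (isRanking_insert_append_cons_iff hx).1 (mem_rankings.1 hρ)
    simp [List.erase_append_right _ hxu, List.idxOf_append_of_notMem hxu, mem_rankings, this]
  · intro p hp
    exact mem_rankings.2 ((isRanking_insert_append_cons_iff hx).2
      (by rw [List.take_append_drop]; exact mem_rankings.1 (mem_sigma.1 hp).1))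
  · intro ρ hρ
    obtain ⟨u, v, rfl, hxu⟩ := decomp ρ hρ
    simp [List.erase_append_right _ hxu, List.idxOf_append_of_notMem hxu]
  · intro p hp
    have hj := mem_range.1 (mem_sigma.1 hp).2
    simp [List.erase_append_right _ (hxw p hp), List.idxOf_append_of_notMem (hxw p hp)]
    exact Sigma.ext rfl (heq_of_eq (min_eq_left (by omega)))
  · intro ρ hρ
    obtain ⟨u, v, rfl, hxu⟩ := decomp ρ hρ
    simp [List.erase_append_right _ hxu, List.idxOf_append_of_notMem hxu]

theorem memL_synth' (C : Finset (Fin n)) (F : Word n → ℝ) : MemL C (synth' C F) := by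
  intro σ hσ
  by_contra h
  exact hσ (if_neg h)

theorem synth'_apply_of_memL {A C : Finset (Fin n)} {F : Word n → ℝ} (hF : MemL A F)
    (hAC : A ⊆ C) {σ : Word n} (hσ : IsRanking C σ) :
    synth' C F σ = (A.card.factorial / C.card.factorial : ℝ) * F (restrictWord σ A) := by
  rw [synth', if_pos hσ,
    sum_eq_single_of_mem (restrictWord σ A) (mem_allWords.2 (hσ.1.filter _))]
  · rw [if_pos (restrictWord_sublist σ A), (hσ.restrictWord hAC).length_eq]
  · intro π _ hne
    split_ifs with hπσ
    · by_cases hFπ : F π = 0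
      · rw [hFπ, mul_zero]
      · exact absurd ((hF π hFπ).eq_restrictWord_of_sublist hσ hAC hπσ) hne
    · rfl

theorem synth'_of_memL_self {A : Finset (Fin n)} {F : Word n → ℝ} (hF : MemL A F) :
    synth' A F = F := by
  funext σ
  by_cases hσ : IsRanking A σ
  · rw [synth'_apply_of_memL hF subset_rfl hσ, hσ.restrictWord_eq_self, div_self (by positivity),
      one_mul]
  · rw [synth', if_neg hσ]
    exact (not_imp_comm.1 (hF σ) hσ).symm

theorem synth'_synth' {A C D : Finset (Fin n)} {F : Word n → ℝ} (hF : MemL A F) (hAC : A ⊆ C)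
    (hCD : C ⊆ D) : synth' D (synth' C F) = synth' D F := by
  funext σ
  by_cases hσ : IsRanking D σ
  · rw [synth'_apply_of_memL (memL_synth' C F) hCD hσ,
      synth'_apply_of_memL hF hAC (hσ.restrictWord hCD), restrictWord_restrictWord hAC,
      synth'_apply_of_memL hF (hAC.trans hCD) hσ, ← mul_assoc]
    congr 1
    field_simp
  · simp only [synth', if_neg hσ]

/-- `Σ_{σ ⊃ π} G σ`, i.e. the marginal `M_B G (π)` for `B` the content of `π`. -/
noncomputable def sublistSum (G : Word n → ℝ) (π : Word n) : ℝ :=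
  ∑ σ ∈ allWords n, if π <+ σ then G σ else 0

theorem marg_apply (B : Finset (Fin n)) (G : Word n → ℝ) (π : Word n) :
    marg B G π = if IsRanking B π then sublistSum G π else 0 :=
  rfl

theorem sublistSum_eq_zero_of_not_nodup (G : Word n → ℝ) {π : Word n} (hπ : ¬π.Nodup) :
    sublistSum G π = 0 :=
  sum_eq_zero fun _ hσ => if_neg fun h => hπ (h.nodup (mem_allWords.1 hσ))

theorem sublistSum_of_memL {C : Finset (Fin n)} {G : Word n → ℝ} (hG : MemL C G) (π : Word n) :
    sublistSum G π = ∑ σ ∈ rankings n C, if π <+ σ then G σ else 0 := by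
  refine (sum_subset (fun σ hσ => mem_allWords.2 (mem_rankings.1 hσ).1) fun σ _ hσ => ?_).symm
  rw [not_imp_comm.1 (hG σ) (mt mem_rankings.2 hσ), ite_self]

def MarginalsVanishBelow (k : ℕ) (G : Word n → ℝ) : Prop :=
  ∀ ν : Word n, ν.length < k → sublistSum G ν = 0

theorem MemH.marginalsVanishBelow {A : Finset (Fin n)} {F : Word n → ℝ} (hF : MemH A F)
    (hA : 2 ≤ A.card) : MarginalsVanishBelow A.card F := by
  intro ν hν
  by_cases hnd : ν.Nodup
  swap
  · exact sublistSum_eq_zero_of_not_nodup F hnd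
  have hcard : ν.toFinset.card = ν.length := List.toFinset_card_of_nodup hnd
  rw [sublistSum_of_memL hF.1]
  by_cases hνA : ν.toFinset ⊆ A
  · rcases lt_or_ge ν.length 2 with hshort | hlong
    · rw [← hF.2.2 hA]
      refine sum_congr rfl fun τ hτ => if_pos ?_
      rcases ν with _ | ⟨a, _ | ⟨b, l⟩⟩
      · exact List.nil_sublist τ
      · rw [List.singleton_sublist, ← List.mem_toFinset, (mem_rankings.1 hτ).2]
        exact hνA (by simp)
      · simp at hshort
    · have hss : ν.toFinset ⊂ A := ssubset_of_subset_of_ne hνA (by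
        rintro rfl
        omega)
      have := congrFun (hF.2.1 _ hss (by omega)) ν
      rwa [marg_apply, if_pos ⟨hnd, rfl⟩, sublistSum_of_memL hF.1] at this
  · refine sum_eq_zero fun τ hτ => if_neg fun h => hνA fun a ha => ?_
    rw [← (mem_rankings.1 hτ).2]
    exact List.mem_toFinset.2 (h.subset (List.mem_toFinset.1 ha))

section Insert

variable {C : Finset (Fin n)} {G : Word n → ℝ} {x : Fin n}

theorem sublistSum_synth'_insert (hG : MemL C G) (hx : x ∉ C) (π : Word n) :
    sublistSum (synth' (insert x C) G) π
      = (∑ w ∈ rankings n C, ∑ j ∈ range (w.length + 1),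
          if π <+ w.take j ++ x :: w.drop j then G w else 0) / (C.card + 1) := by
  rw [sublistSum_of_memL (memL_synth' _ _), sum_rankings_insert hx, sum_div]
  refine sum_congr rfl fun w hw => ?_
  rw [sum_div]
  refine sum_congr rfl fun j _ => ?_
  have hw := mem_rankings.1 hw
  have hins : IsRanking (insert x C) (w.take j ++ x :: w.drop j) :=
    (isRanking_insert_append_cons_iff hx).2 (by rwa [List.take_append_drop])
  rw [synth'_apply_of_memL hG (subset_insert x C) hins, restrictWord_append_cons_of_notMem hx,
    List.take_append_drop, hw.restrictWord_eq_self, card_insert_of_notMem hx, Nat.factorial_succ]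
  split_ifs
  · push_cast
    field_simp
  · rw [zero_div]

theorem sublistSum_synth'_insert_of_notMem (hG : MemL C G) (hx : x ∉ C) {π : Word n}
    (hxπ : x ∉ π) : sublistSum (synth' (insert x C) G) π = sublistSum G π := by
  rw [sublistSum_synth'_insert hG hx, sublistSum_of_memL hG, sum_div]
  refine sum_congr rfl fun w hw => ?_
  have hw := mem_rankings.1 hw
  have hxw : x ∉ w := fun h => hx (hw.2 ▸ List.mem_toFinset.2 h)
  have hsub : ∀ j, π <+ w.take j ++ x :: w.drop j ↔ π <+ w := fun j => by
    rw [List.sublist_append_cons_iff_of_notMem hxπ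
      (fun h => hxw ((List.take_sublist _ _).subset h)), List.take_append_drop]
  simp only [hsub, sum_const, card_range, nsmul_eq_mul, hw.length_eq]
  push_cast
  field_simp

theorem sublistSum_synth'_insert_middle (hG : MemL C G) (hx : x ∉ C) {π₁ π₂ : Word n}
    (hπ : (π₁ ++ x :: π₂).Nodup) :
    sublistSum (synth' (insert x C) G) (π₁ ++ x :: π₂)
      = (sublistSum G (π₁ ++ π₂) + ∑ y, sublistSum G (π₁ ++ y :: π₂)) / (C.card + 1) := by
  rw [sublistSum_synth'_insert hG hx]
  congr 1
  simp only [sublistSum_of_memL hG]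
  rw [sum_comm (s := univ), ← sum_add_distrib]
  refine sum_congr rfl fun w hw => ?_
  have hw := mem_rankings.1 hw
  have hxw : x ∉ w := fun h => hx (hw.2 ▸ List.mem_toFinset.2 h)
  have hxπ₁ : x ∉ π₁ := fun h => (List.nodup_cons.1 (List.nodup_middle.1 hπ)).1 (by simp [h])
  have hsplit : ∀ j,
      π₁ ++ x :: π₂ <+ w.take j ++ x :: w.drop j ↔ π₁ <+ w.take j ∧ π₂ <+ w.drop j :=
    fun j => List.append_cons_sublist_append_cons_iff hxπ₁
      (fun h => hxw ((List.take_sublist _ _).subset h))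
      (fun h => hxw ((List.drop_sublist _ _).subset h))
  simp only [hsplit]
  exact List.sum_range_sublist_take_and_drop hw.1 π₁ π₂ (G w)

theorem MarginalsVanishBelow.synth'_insert {k : ℕ} (hv : MarginalsVanishBelow k G)
    (hG : MemL C G) (hx : x ∉ C) : MarginalsVanishBelow k (synth' (insert x C) G) := by
  intro π hπ
  by_cases hnd : π.Nodup
  swap
  · exact sublistSum_eq_zero_of_not_nodup _ hnd
  by_cases hxπ : x ∈ π
  · obtain ⟨π₁, π₂, rfl, -⟩ := List.eq_append_cons_of_mem hxπ
    simp only [List.length_append, List.length_cons] at hπ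
    rw [sublistSum_synth'_insert_middle hG hx hnd, hv _ (by simp; omega),
      sum_eq_zero fun y _ => hv _ (by simp; omega), add_zero, zero_div]
  · rw [sublistSum_synth'_insert_of_notMem hG hx hxπ]
    exact hv π hπ

end Insert

variable {A C : Finset (Fin n)} {F : Word n → ℝ}

theorem MarginalsVanishBelow.synth'_of_subset {k : ℕ} (hv : MarginalsVanishBelow k F)
    (hF : MemL A F) (hAC : A ⊆ C) : MarginalsVanishBelow k (synth' C F) := by
  refine Finset.induction_on_superset (p := fun C => MarginalsVanishBelow k (synth' C F)) hAC
    (by rwa [synth'_of_memL_self hF]) ?_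
  intro x s hAs hxs ih
  rw [← synth'_synth' hF hAs (subset_insert x s)]
  exact ih.synth'_insert (memL_synth' s F) hxs

theorem sublistSum_synth'_of_isRanking (hF : MemL A F) (hAC : A ⊆ C) {π : Word n}
    (hπ : IsRanking A π) : sublistSum (synth' C F) π = F π := by
  refine Finset.induction_on_superset (p := fun C => sublistSum (synth' C F) π = F π) hAC ?_ ?_
  · rw [synth'_of_memL_self hF, sublistSum_of_memL hF,
      sum_eq_single_of_mem π (mem_rankings.2 hπ)]
    · exact if_pos (List.Sublist.refl π)
    · intro τ hτ hne
      have hlen : π.length = τ.length := by rw [hπ.length_eq, (mem_rankings.1 hτ).length_eq]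
      exact if_neg fun h => hne (h.eq_of_length hlen).symm
  · intro x s hAs hxs ih
    have hxπ : x ∉ π := fun h => hxs (hAs (hπ.2 ▸ List.mem_toFinset.2 h))
    rw [← synth'_synth' hF hAs (subset_insert x s),
      sublistSum_synth'_insert_of_notMem (memL_synth' s F) hxs hxπ, ih]

theorem marg_synth'_of_memL (hF : MemL A F) (hAC : A ⊆ C) : marg A (synth' C F) = F := by
  funext π
  rw [marg_apply]
  split_ifs with hπ
  · exact sublistSum_synth'_of_isRanking hF hAC hπ
  · exact (not_imp_comm.1 (hF π) hπ).symm

end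

theorem synth'_mem_wavelet_subspace_general {n : ℕ}
    (A : Finset (Fin n)) (hA : 2 ≤ A.card)
    (F : Word n → ℝ) (hF : MemH A F) :
    marg A (synth' Finset.univ F) = F ∧
    (∀ B : Finset (Fin n), 2 ≤ B.card → B.card ≤ A.card - 1 →
      marg B (synth' Finset.univ F) = 0) ∧
    (∑ σ ∈ rankings n Finset.univ, synth' Finset.univ F σ = 0) ∧
    (∀ G : Word n → ℝ, MemH A G → synth' Finset.univ F = synth' Finset.univ G → F = G) := by
  have hv := (hF.marginalsVanishBelow hA).synth'_of_subset hF.1 (subset_univ A)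
  refine ⟨marg_synth'_of_memL hF.1 (subset_univ A), fun B _ hB => ?_, ?_, fun G hG hFG => ?_⟩
  · funext π
    rw [marg_apply]
    split_ifs with hπ
    · exact hv π (by rw [hπ.length_eq]; omega)
    · rfl
  · simpa [sublistSum_of_memL (memL_synth' _ _)] using hv [] (by rw [List.length_nil]; omega)
  · rw [← marg_synth'_of_memL hF.1 (subset_univ A), hFG,
      marg_synth'_of_memL hG.1 (subset_univ A)]

/-- **The alternative embedding sends localization spaces into the wavelet subspaces of
`L(Γ([n]))`:** for `F ∈ H_A` with `|A| = k ≥ 2`: (i) `M_A(φ'_{[n]} F) = F`;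
(ii) `M_B(φ'_{[n]} F) = 0` for `2 ≤ |B| ≤ k−1`; (iii) `Σ_{σ∈Γ([n])} φ'_{[n]}F(σ) = 0`.
In particular `φ'_{[n]}` is injective on `H_A`. -/
theorem synth'_mem_wavelet_subspace {n : ℕ} (hn : 2 ≤ n)
    (A : Finset (Fin n)) (hA : 2 ≤ A.card)
    (F : Word n → ℝ) (hF : MemH A F) :
    marg A (synth' Finset.univ F) = F ∧
    (∀ B : Finset (Fin n), 2 ≤ B.card → B.card ≤ A.card - 1 →
      marg B (synth' Finset.univ F) = 0) ∧
    (∑ σ ∈ rankings n Finset.univ, synth' Finset.univ F σ = 0) ∧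
    (∀ G : Word n → ℝ, MemH A G → synth' Finset.univ F = synth' Finset.univ G → F = G) :=
  synth'_mem_wavelet_subspace_general A hA F hF
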